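/- If X is strongly (n+1)-star-Menger and metacompact, then X is n-star-Menger. -/
import Mathlib


open Set Filter Topology

/-- `𝒰` is an open cover of the space `X`. -/
def IsOpenCover {X : Type} [TopologicalSpace X] (𝒰 : Set (Set X)) : Prop :=
  (∀ u ∈ 𝒰, IsOpen u) ∧ ⋃₀ 𝒰 = Set.univ

/-- The star of a set `A` with respect to a collection `𝒰`. -/
def st {X : Type} (A : Set X) (𝒰 : Set (Set X)) : Set X :=
  ⋃₀ {u ∈ 𝒰 | (u ∩ A).Nonempty}
/-- The `n`-fold iterated star `St^n(A,𝒰)`. -/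
def iterSt {X : Type} : ℕ → Set X → Set (Set X) → Set X
  | 0, A, _ => A
  | n + 1, A, 𝒰 => st (iterSt n A 𝒰) 𝒰

/-- `X` is `n`-star-Menger. -/
def NStarMenger (X : Type) [TopologicalSpace X] (n : ℕ) : Prop :=
  ∀ 𝒰 : ℕ → Set (Set X), (∀ k, IsOpenCover (𝒰 k)) →
    ∃ 𝒱 : ℕ → Set (Set X), (∀ k, (𝒱 k).Finite ∧ 𝒱 k ⊆ 𝒰 k) ∧
      ∀ x : X, ∃ k, x ∈ iterSt n (⋃₀ 𝒱 k) (𝒰 k)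

/-- `X` is strongly `n`-star-Menger. -/
def StronglyNStarMenger (X : Type) [TopologicalSpace X] (n : ℕ) : Prop :=
  ∀ 𝒰 : ℕ → Set (Set X), (∀ k, IsOpenCover (𝒰 k)) →
    ∃ F : ℕ → Set X, (∀ k, (F k).Finite) ∧
      ∀ x : X, ∃ k, x ∈ iterSt n (F k) (𝒰 k)

/-- `X` is metacompact: every open cover has a point-finite open refinement. -/
def Metacompact (X : Type) [TopologicalSpace X] : Prop :=
  ∀ 𝒰 : Set (Set X), IsOpenCover 𝒰 →
    ∃ 𝒱 : Set (Set X), (∀ v ∈ 𝒱, IsOpen v) ∧ ⋃₀ 𝒱 = Set.univ ∧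
      (∀ v ∈ 𝒱, ∃ u ∈ 𝒰, v ⊆ u) ∧ ∀ x : X, {v ∈ 𝒱 | x ∈ v}.Finite


lemma st_mono_refine {X : Type} {A B : Set X} {𝒲 𝒰 : Set (Set X)}
    (hAB : A ⊆ B) (href : ∀ w ∈ 𝒲, ∃ u ∈ 𝒰, w ⊆ u) : st A 𝒲 ⊆ st B 𝒰 := by
  rintro x ⟨w, ⟨hw, y, hyw, hyA⟩, hxw⟩
  obtain ⟨u, hu, hwu⟩ := href w hw
  exact ⟨u, ⟨hu, y, hwu hyw, hAB hyA⟩, hwu hxw⟩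

lemma iterSt_mono_refine {X : Type} (n : ℕ) {A B : Set X} {𝒲 𝒰 : Set (Set X)}
    (hAB : A ⊆ B) (href : ∀ w ∈ 𝒲, ∃ u ∈ 𝒰, w ⊆ u) :
    iterSt n A 𝒲 ⊆ iterSt n B 𝒰 := by
  induction n with
  | zero => exact hAB
  | succ m ih => exact st_mono_refine ih href

lemma iterSt_succ_eq {X : Type} (n : ℕ) (A : Set X) (𝒰 : Set (Set X)) :
    iterSt (n + 1) A 𝒰 = iterSt n (st A 𝒰) 𝒰 := by
  induction n with
  | zero => rfl
  | succ m ih => show st (iterSt (m+1) A 𝒰) 𝒰 = _; rw [ih]; rfl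

theorem stmt (X : Type) [TopologicalSpace X] (n : ℕ)
    (h : StronglyNStarMenger X (n + 1)) (hmc : Metacompact X) :
    NStarMenger X n := by
  intro 𝒰 h𝒰
  -- pick point-finite open refinements
  choose 𝒲 h𝒲open h𝒲cov h𝒲ref h𝒲pf using fun k => hmc (𝒰 k) (h𝒰 k)
  obtain ⟨F, hFfin, hFcov⟩ := h (fun k => 𝒲 k) (fun k => ⟨h𝒲open k, h𝒲cov k⟩)
  -- choice: each w in 𝒲 k is contained in some ρ k w ∈ 𝒰 k
  choose! ρ hρmem hρsub using h𝒲ref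
  set 𝒱 : ℕ → Set (Set X) := fun k => ρ k '' {w ∈ 𝒲 k | (w ∩ F k).Nonempty} with h𝒱
  refine ⟨𝒱, fun k => ⟨?_, ?_⟩, ?_⟩
  · apply Set.Finite.image
    have hsub : {w ∈ 𝒲 k | (w ∩ F k).Nonempty} ⊆ ⋃ x ∈ F k, {w ∈ 𝒲 k | x ∈ w} := by
      rintro w ⟨hw, y, hyw, hyF⟩
      exact Set.mem_biUnion hyF ⟨hw, hyw⟩
    exact ((hFfin k).biUnion (fun x _ => h𝒲pf k x)).subset hsub
  · rintro u ⟨w, ⟨hw, _⟩, rfl⟩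
    exact hρmem k w hw
  · intro x
    obtain ⟨k, hk⟩ := hFcov x
    refine ⟨k, ?_⟩
    rw [iterSt_succ_eq] at hk
    refine iterSt_mono_refine n ?_ (fun w hw => ⟨ρ k w, hρmem k w hw, hρsub k w hw⟩) hk
    rintro y ⟨w, ⟨hw, hne⟩, hyw⟩
    exact ⟨ρ k w, ⟨w, ⟨hw, hne⟩, rfl⟩, hρsub k w hw hyw⟩
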